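/- (Theorem 2: interpolation of the p-adic twisted (h,q)-Euler-ℓ-function at negative integers.) The three limits defining E^{(h)}_{n,q,ξ,ψ}, E^{(h)}_{n,q^p,ξ^p,ψ}, and the value l^{(h)}_{p,q,ξ}(−n, ψ) := lim_{N→∞} ((1+q)/(1+q^{dp^N})) Σ_{0 ≤ a < dp^N, p ∤ a} ψ(a) q^{(h−1)a} ξ^a [a]_q^n (−q)^a (the fermionic integral ∫_{X*} ψ(t) q^{(h−1)t} ξ^t [t]_q^n dμ_{−q}(t) over X* = X \ pX) all exist in K, and l^{(h)}_{p,q,ξ}(−n, ψ) = E^{(h)}_{n,q,ξ,ψ} − ψ(p) · [p]_q^n · ((1+q)/(1+q^p)) · E^{(h)}_{n,q^p,ξ^p,ψ}. (Taking ψ = χ_n, the primitive character attached to χω^{−n}, this is l^{(h)}_{p,q,ξ}(−n, χ) = E^{(h)}_{n,q,ξ,χ_n} − χ_n(p)[p]_q^n([2]_q/[2]_{q^p})E^{(h)}_{n,q^p,ξ^p,χ_n}.) -/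

import Mathlib

/-!
The Riemann sums `S_N = ∑_{a < d p^N} ψ(a) q^{(h-1)a} ξ^a [a]_q^n (-q)^a` form a Cauchy sequence.
Splitting `[0, d p^{N+1})` into `p` blocks of length `D = d p^N`, the `i`-th block is `(-1)^i` times
the first one up to an error of size `‖1 - q^D‖ ≤ ‖1 - q‖ p^{-N}`; this decay comes from the
binomial theorem and `‖1 - q‖ < p^{-1/(p-1)}`, and the signs add up to `1` because `p` is odd.
On the multiples `a = p b` the summand is `ψ(p) [p]_q^n` times the summand for `(q^p, ξ^p)` at `b`,
so removing them from `S_{N+1}` leaves `S_{N+1} - ψ(p) [p]_q^n S'_N`, whence the relation between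
the limits.
-/

open Filter Finset IsUltrametricDist

section NormedField

variable {K : Type*} [NormedField K]

lemma one_add_ne_zero_of_norm_one_sub_lt_one (h2 : ‖(2 : K)‖ = 1) {q : K} (hq : ‖1 - q‖ < 1) :
    1 + q ≠ 0 := by
  intro h
  rw [show 1 - q = 2 by linear_combination -h, h2] at hq
  exact hq.false

lemma norm_one_sub_div_one_sub_le {q w : K} {δ : ℝ} (hδ : 0 ≤ δ) (hw : ‖1 - w‖ ≤ ‖1 - q‖ * δ) :
    ‖(1 - w) / (1 - q)‖ ≤ δ := by
  rcases eq_or_ne (1 - q) 0 with hq | hq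
  · simpa [hq] using hδ
  · rwa [norm_div, div_le_iff₀ (norm_pos_iff.mpr hq), mul_comm]

end NormedField

section Ultrametric

variable {K : Type*} [NormedField K] [IsUltrametricDist K]

lemma norm_pow_sub_pow_le_of_norm_le_one {x y : K} (hx : ‖x‖ ≤ 1) (hy : ‖y‖ ≤ 1) (n : ℕ) :
    ‖x ^ n - y ^ n‖ ≤ ‖x - y‖ := by
  induction n with
  | zero => simp
  | succ n ih =>
    calc ‖x ^ (n + 1) - y ^ (n + 1)‖ = ‖x ^ n * (x - y) + (x ^ n - y ^ n) * y‖ := by ring_nf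
      _ ≤ max (‖x‖ ^ n * ‖x - y‖) (‖x ^ n - y ^ n‖ * ‖y‖) :=
        (norm_add_le_max _ _).trans_eq (by simp only [norm_mul, norm_pow])
      _ ≤ ‖x - y‖ :=
        max_le (mul_le_of_le_one_left (norm_nonneg _) (pow_le_one₀ (norm_nonneg _) hx))
          ((mul_le_of_le_one_right (norm_nonneg _) hy).trans ih)

lemma norm_one_sub_pow_le {u : K} (hu : ‖u‖ ≤ 1) (k : ℕ) : ‖1 - u ^ k‖ ≤ ‖1 - u‖ := by
  simpa using norm_pow_sub_pow_le_of_norm_le_one norm_one.le hu k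

lemma norm_zpow_sub_one_le {u : K} (hu : ‖u‖ = 1) (z : ℤ) : ‖u ^ z - 1‖ ≤ ‖1 - u‖ := by
  obtain ⟨k, rfl | rfl⟩ := z.eq_nat_or_neg
  · simpa [norm_sub_rev] using norm_one_sub_pow_le hu.le k
  · have hu0 : u ^ k ≠ 0 := pow_ne_zero k (norm_ne_zero_iff.mp (by simp [hu]))
    calc ‖u ^ (-(k : ℤ)) - 1‖ = ‖u ^ (-(k : ℤ)) * (1 - u ^ k)‖ := by
          rw [mul_sub, mul_one, zpow_neg, zpow_natCast, inv_mul_cancel₀ hu0]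
      _ ≤ ‖1 - u‖ := by
          rw [norm_mul, norm_zpow, hu, one_zpow, one_mul]
          exact norm_one_sub_pow_le hu.le k

lemma norm_eq_one_of_norm_one_sub_lt_one {q : K} (hq : ‖1 - q‖ < 1) : ‖q‖ = 1 := by
  have hlt : ‖q - 1‖ < 1 := by rwa [norm_sub_rev]
  have := norm_add_eq_max_of_norm_ne_norm (x := (1 : K)) (y := q - 1)
    (by rw [norm_one]; exact hlt.ne')
  rwa [add_sub_cancel, norm_one, max_eq_left hlt.le] at this

lemma norm_mul_add_pow_sub_pow_le {W X T : K} (hX : ‖X‖ ≤ 1) (hT : ‖T‖ ≤ 1) (n : ℕ) :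
    ‖W * (X + T) ^ n - X ^ n‖ ≤ max ‖W - 1‖ ‖T‖ := by
  have hXT : ‖X + T‖ ≤ 1 := (norm_add_le_max _ _).trans (max_le hX hT)
  calc ‖W * (X + T) ^ n - X ^ n‖ = ‖(W - 1) * (X + T) ^ n + ((X + T) ^ n - X ^ n)‖ := by ring_nf
    _ ≤ max (‖W - 1‖ * ‖X + T‖ ^ n) ‖(X + T) ^ n - X ^ n‖ :=
      (norm_add_le_max _ _).trans_eq (by simp only [norm_mul, norm_pow])
    _ ≤ max ‖W - 1‖ ‖T‖ :=
      max_le_max (mul_le_of_le_one_right (norm_nonneg _) (pow_le_one₀ (norm_nonneg _) hXT))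
        (by simpa using norm_pow_sub_pow_le_of_norm_le_one hXT hX n)

end Ultrametric

lemma lt_one_of_pow_pred_le_inv {p : ℕ} (hp : 1 < p) {x : ℝ}
    (hx : x ^ (p - 1) ≤ (p : ℝ)⁻¹) : x < 1 := by
  by_contra! h1
  have : (1 : ℝ) < p := by exact_mod_cast hp
  linarith [one_le_pow₀ (n := p - 1) h1, inv_lt_one_of_one_lt₀ this]

lemma pow_pred_le_inv_of_lt_rpow {p : ℕ} (hp : 1 < p) {x : ℝ} (hx0 : 0 ≤ x)
    (hx : x < (p : ℝ) ^ (-(1 : ℝ) / ((p : ℝ) - 1))) : x ^ (p - 1) ≤ (p : ℝ)⁻¹ := by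
  have hp1 : (1 : ℝ) < p := by exact_mod_cast hp
  calc x ^ (p - 1) ≤ ((p : ℝ) ^ (-(1 : ℝ) / ((p : ℝ) - 1))) ^ (p - 1) :=
        pow_le_pow_left₀ hx0 hx.le _
    _ = (p : ℝ)⁻¹ := by
        rw [← Real.rpow_natCast, ← Real.rpow_mul (by positivity), Nat.cast_pred (by omega),
          div_mul_cancel₀ _ (by linarith), Real.rpow_neg_one]

section Contraction

variable {K : Type*} [NormedField K] [IsUltrametricDist K] {p : ℕ}

/-- In `(1 + z) ^ p - 1 = ∑ C(p, k) z ^ k` every coefficient but the last is divisible by `p`. -/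
lemma norm_one_add_pow_sub_one_le (hp : p.Prime) (hpK : ‖(p : K)‖ ≤ (p : ℝ)⁻¹) {z : K}
    (hz : ‖z‖ ^ (p - 1) ≤ (p : ℝ)⁻¹) : ‖(1 + z) ^ p - 1‖ ≤ (p : ℝ)⁻¹ * ‖z‖ := by
  have hz1 : ‖z‖ ≤ 1 := (lt_one_of_pow_pred_le_inv hp.one_lt hz).le
  have expand : (1 + z) ^ p - 1 = ∑ k ∈ range p, z ^ (k + 1) * (p.choose (k + 1) : K) := by
    rw [add_comm, add_pow, sum_range_succ']
    simp
  rw [expand]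
  refine norm_sum_le_of_forall_le_of_nonneg (by positivity) fun k hk => ?_
  rw [norm_mul, norm_pow]
  rcases (show k + 1 ≤ p from mem_range.mp hk).eq_or_lt with hkp | hkp
  · rw [hkp, Nat.choose_self, Nat.cast_one, norm_one, mul_one,
      ← pow_sub_one_mul hp.ne_zero]
    exact mul_le_mul_of_nonneg_right hz (norm_nonneg _)
  · obtain ⟨t, ht⟩ := hp.dvd_choose_self k.succ_ne_zero hkp
    have hchoose : ‖(p.choose (k + 1) : K)‖ ≤ (p : ℝ)⁻¹ := by
      rw [ht, Nat.cast_mul, norm_mul]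
      exact (mul_le_of_le_one_right (norm_nonneg _) (norm_natCast_le_one K t)).trans hpK
    rw [mul_comm]
    exact mul_le_mul hchoose (pow_le_of_le_one (norm_nonneg _) hz1 k.succ_ne_zero) (by positivity)
      (by positivity)

lemma norm_one_sub_pow_prime_pow_le (hp : p.Prime) (hpK : ‖(p : K)‖ ≤ (p : ℝ)⁻¹) {q : K}
    (hq : ‖1 - q‖ ^ (p - 1) ≤ (p : ℝ)⁻¹) (N : ℕ) :
    ‖1 - q ^ p ^ N‖ ≤ ‖1 - q‖ * (p : ℝ)⁻¹ ^ N := by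
  induction N with
  | zero => simp
  | succ N ih =>
    set z := q ^ p ^ N - 1
    have hzn : ‖z‖ = ‖1 - q ^ p ^ N‖ := norm_sub_rev _ _
    have hz : ‖z‖ ≤ ‖1 - q‖ := hzn ▸ ih.trans (mul_le_of_le_one_right (norm_nonneg _)
      (pow_le_one₀ (by positivity) (inv_le_one_of_one_le₀ (by exact_mod_cast hp.one_le))))
    calc ‖1 - q ^ p ^ (N + 1)‖ = ‖(1 + z) ^ p - 1‖ := by
          rw [norm_sub_rev, pow_succ, pow_mul]
          simp [z]
      _ ≤ (p : ℝ)⁻¹ * ‖z‖ :=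
          norm_one_add_pow_sub_one_le hp hpK ((pow_le_pow_left₀ (norm_nonneg _) hz _).trans hq)
      _ ≤ (p : ℝ)⁻¹ * (‖1 - q‖ * (p : ℝ)⁻¹ ^ N) := by
          rw [hzn]; gcongr
      _ = ‖1 - q‖ * (p : ℝ)⁻¹ ^ (N + 1) := by ring

lemma norm_one_sub_pow_mul_prime_pow_le (hp : p.Prime) (hpK : ‖(p : K)‖ ≤ (p : ℝ)⁻¹) {q : K}
    (hq : ‖1 - q‖ ^ (p - 1) ≤ (p : ℝ)⁻¹) (d N : ℕ) :
    ‖1 - q ^ (d * p ^ N)‖ ≤ ‖1 - q‖ * (p : ℝ)⁻¹ ^ N := by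
  have hq1 : ‖q‖ = 1 :=
    norm_eq_one_of_norm_one_sub_lt_one (lt_one_of_pow_pred_le_inv hp.one_lt hq)
  rw [mul_comm, pow_mul]
  exact (norm_one_sub_pow_le (by simp [hq1]) d).trans (norm_one_sub_pow_prime_pow_le hp hpK hq N)

lemma tendsto_pow_mul_prime_pow_nhds_one (hp : p.Prime) (hpK : ‖(p : K)‖ ≤ (p : ℝ)⁻¹) {q : K}
    (hq : ‖1 - q‖ ^ (p - 1) ≤ (p : ℝ)⁻¹) (d : ℕ) :
    Tendsto (fun N => q ^ (d * p ^ N)) atTop (nhds 1) := by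
  have hbound : Tendsto (fun N => ‖1 - q‖ * (p : ℝ)⁻¹ ^ N) atTop (nhds 0) := by
    simpa using (tendsto_pow_atTop_nhds_zero_of_lt_one (r := (p : ℝ)⁻¹) (by positivity)
      (inv_lt_one_of_one_lt₀ (by exact_mod_cast hp.one_lt))).const_mul ‖1 - q‖
  rw [tendsto_iff_norm_sub_tendsto_zero]
  refine squeeze_zero (fun N => norm_nonneg _) (fun N => ?_) hbound
  rw [norm_sub_rev]
  exact norm_one_sub_pow_mul_prime_pow_le hp hpK hq d N

end Contraction

lemma Function.Periodic.exists_norm_le {E : Type*} [SeminormedAddGroup E] {ψ : ℤ → E} {c : ℕ}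
    (hψ : Function.Periodic ψ c) (hc : 0 < c) : ∃ B, ∀ a, ‖ψ a‖ ≤ B := by
  refine ⟨∑ i ∈ range c, ‖ψ i‖, fun a => ?_⟩
  obtain ⟨y, ⟨hy0, hyc⟩, hy⟩ := hψ.exists_mem_Ico₀ (by exact_mod_cast hc) a
  lift y to ℕ using hy0
  rw [hy]
  exact single_le_sum (f := fun i : ℕ => ‖ψ i‖) (fun i _ => norm_nonneg _)
    (mem_range.mpr (by exact_mod_cast hyc))

lemma sum_range_mul_eq_sum_sum {M : Type*} [AddCommMonoid M] (f : ℕ → M) (D r : ℕ) :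
    ∑ a ∈ range (D * r), f a = ∑ a ∈ range D, ∑ i ∈ range r, f (D * i + a) := by
  rw [sum_comm]
  induction r with
  | zero => simp
  | succ r ih => rw [Nat.mul_succ, sum_range_add, ih, sum_range_succ]

lemma sum_range_mul_sub_sum_range {R : Type*} [Ring R] (f : ℕ → R) (D : ℕ) {r : ℕ} (hr : Odd r) :
    ∑ a ∈ range (D * r), f a - ∑ a ∈ range D, f a =
      ∑ a ∈ range D, ∑ i ∈ range r, (f (D * i + a) - (-1) ^ i * f a) := by
  rw [sum_range_mul_eq_sum_sum, ← sum_sub_distrib]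
  refine sum_congr rfl fun a _ => ?_
  rw [sum_sub_distrib, ← sum_mul, neg_one_geom_sum, if_neg (Nat.not_even_iff_odd.mpr hr),
    one_mul]

lemma sum_filter_not_dvd_range_mul {M : Type*} [AddCommGroup M] (f : ℕ → M) {p : ℕ} (hp : 0 < p)
    (k : ℕ) :
    ∑ a ∈ (range (p * k)).filter (fun a => ¬ p ∣ a), f a =
      ∑ a ∈ range (p * k), f a - ∑ b ∈ range k, f (p * b) := by
  have hmultiples : (range (p * k)).filter (p ∣ ·) = (range k).image (p * ·) := by
    ext a
    simp only [mem_filter, mem_range, mem_image]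
    constructor
    · rintro ⟨ha, b, rfl⟩
      exact ⟨b, Nat.lt_of_mul_lt_mul_left ha, rfl⟩
    · rintro ⟨b, hb, rfl⟩
      exact ⟨Nat.mul_lt_mul_of_pos_left hb hp, dvd_mul_right p b⟩
  rw [eq_sub_iff_add_eq, ← sum_filter_add_sum_filter_not (range (p * k)) (p ∣ ·), add_comm,
    hmultiples, sum_image fun x _ y _ hxy => Nat.eq_of_mul_eq_mul_left hp hxy]

section RiemannSum

variable {K : Type*} [NormedField K]

def eulerSummand (ψ : ℤ → K) (q ξ : K) (h : ℤ) (n a : ℕ) : K :=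
  ψ a * q ^ ((h - 1) * (a : ℤ)) * ξ ^ a * ((1 - q ^ a) / (1 - q)) ^ n * (-q) ^ a

def eulerRiemannSum (ψ : ℤ → K) (q ξ : K) (h : ℤ) (n D : ℕ) : K :=
  ∑ a ∈ range D, eulerSummand ψ q ξ h n a

variable {ψ : ℤ → K} {q ξ : K} {h : ℤ} {n : ℕ}

lemma eulerSummand_mul_add_sub {D : ℕ} (hq : q ≠ 0) (hD : Odd D) (hξ : ξ ^ D = 1)
    (hψ : Function.Periodic ψ D) (i a : ℕ) :
    eulerSummand ψ q ξ h n (D * i + a) - (-1) ^ i * eulerSummand ψ q ξ h n a =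
      (-1) ^ i * (ψ a * q ^ ((h - 1) * (a : ℤ)) * ξ ^ a * (-q) ^ a) *
        ((q ^ D) ^ (h * i) * ((1 - q ^ a) / (1 - q) + q ^ a * ((1 - (q ^ D) ^ i) / (1 - q))) ^ n
          - ((1 - q ^ a) / (1 - q)) ^ n) := by
  have hψ' : ψ ((D * i + a : ℕ) : ℤ) = ψ a := by
    rw [show ((D * i + a : ℕ) : ℤ) = a + (i : ℤ) * D by push_cast; ring]
    exact hψ.int_mul i a
  have hξ' : ξ ^ (D * i + a) = ξ ^ a := by rw [pow_add, pow_mul, hξ, one_pow, one_mul]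
  have hzpow : q ^ ((h - 1) * ((D * i + a : ℕ) : ℤ)) =
      q ^ ((h - 1) * (a : ℤ)) * (q ^ D) ^ ((h - 1) * (i : ℤ)) := by
    rw [← zpow_natCast q D, ← zpow_mul, ← zpow_add₀ hq]
    push_cast
    ring_nf
  have hsign : (-q) ^ (D * i + a) = (-1) ^ i * (q ^ D) ^ i * (-q) ^ a := by
    rw [pow_add, pow_mul, hD.neg_pow, neg_eq_neg_one_mul, mul_pow]
  have hweight : (q ^ D) ^ ((h - 1) * (i : ℤ)) * (q ^ D) ^ i = (q ^ D) ^ (h * i) := by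
    rw [← zpow_natCast (q ^ D) i, ← zpow_add₀ (pow_ne_zero D hq)]
    ring_nf
  have hqnum : (1 - q ^ (D * i + a)) / (1 - q) =
      (1 - q ^ a) / (1 - q) + q ^ a * ((1 - (q ^ D) ^ i) / (1 - q)) := by
    rw [← pow_mul, pow_add, ← mul_div_assoc, ← add_div]
    ring
  rw [eulerSummand, eulerSummand, hψ', hξ', hzpow, hsign, hqnum, ← hweight]
  ring

lemma eulerSummand_mul_left (hψ : ∀ a b, ψ (a * b) = ψ a * ψ b) {p : ℕ} (hp : Odd p) (b : ℕ) :
    eulerSummand ψ q ξ h n (p * b) =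
      ψ p * ((1 - q ^ p) / (1 - q)) ^ n * eulerSummand ψ (q ^ p) (ξ ^ p) h n b := by
  have hqnum : (1 - q ^ (p * b)) / (1 - q) =
      (1 - q ^ p) / (1 - q) * ((1 - (q ^ p) ^ b) / (1 - q ^ p)) := by
    rcases eq_or_ne (1 - q ^ p) 0 with hqp | hqp
    · have hqp1 : q ^ p = 1 := by linear_combination -hqp
      simp [pow_mul, hqp1]
    · rw [pow_mul, div_mul_div_comm, mul_comm (1 - q), mul_div_mul_left _ _ hqp]
  have hzpow : q ^ ((h - 1) * ((p * b : ℕ) : ℤ)) = (q ^ p) ^ ((h - 1) * (b : ℤ)) := by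
    rw [← zpow_natCast q p, ← zpow_mul]
    push_cast
    ring_nf
  rw [eulerSummand, eulerSummand, hzpow, Nat.cast_mul, hψ, hqnum, mul_pow, pow_mul ξ,
    pow_mul (-q), hp.neg_pow]
  ring

lemma sum_filter_not_dvd_eulerSummand (hψ : ∀ a b, ψ (a * b) = ψ a * ψ b) {p : ℕ} (hp : Odd p)
    (k : ℕ) :
    ∑ a ∈ (range (p * k)).filter (fun a => ¬ p ∣ a), eulerSummand ψ q ξ h n a =
      eulerRiemannSum ψ q ξ h n (p * k) -
        ψ p * ((1 - q ^ p) / (1 - q)) ^ n * eulerRiemannSum ψ (q ^ p) (ξ ^ p) h n k := by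
  rw [sum_filter_not_dvd_range_mul _ hp.pos, eulerRiemannSum, eulerRiemannSum, mul_sum]
  simp only [eulerSummand_mul_left hψ hp]

variable [IsUltrametricDist K]

lemma norm_eulerSummand_mul_add_sub_le {D : ℕ} (hq : ‖1 - q‖ < 1) (hD : Odd D) (hξ : ξ ^ D = 1)
    (hψ : Function.Periodic ψ D) {δ : ℝ} (hδ : 0 ≤ δ) (hqD : ‖1 - q ^ D‖ ≤ ‖1 - q‖ * δ) (i a : ℕ) :
    ‖eulerSummand ψ q ξ h n (D * i + a) - (-1) ^ i * eulerSummand ψ q ξ h n a‖ ≤ ‖ψ a‖ * δ := by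
  have hq1 : ‖q‖ = 1 := norm_eq_one_of_norm_one_sub_lt_one hq
  have hξ1 : ‖ξ‖ = 1 := (isOfFinOrder_iff_pow_eq_one.2 ⟨D, hD.pos, hξ⟩).norm_eq_one
  have hqD1 : ‖q ^ D‖ = 1 := by rw [norm_pow, hq1, one_pow]
  have hX : ‖(1 - q ^ a) / (1 - q)‖ ≤ 1 :=
    norm_one_sub_div_one_sub_le zero_le_one
      ((norm_one_sub_pow_le hq1.le a).trans_eq (mul_one _).symm)
  have hT : ∀ δ' : ℝ, 0 ≤ δ' → ‖1 - q ^ D‖ ≤ ‖1 - q‖ * δ' →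
      ‖q ^ a * ((1 - (q ^ D) ^ i) / (1 - q))‖ ≤ δ' := fun δ' hδ' hqD' => by
    rw [norm_mul, norm_pow, hq1, one_pow, one_mul]
    exact norm_one_sub_div_one_sub_le hδ' ((norm_one_sub_pow_le hqD1.le i).trans hqD')
  have hW : ‖(q ^ D) ^ (h * i) - 1‖ ≤ δ :=
    (norm_zpow_sub_one_le hqD1 _).trans (hqD.trans (mul_le_of_le_one_left hδ hq.le))
  have hbracket := (norm_mul_add_pow_sub_pow_le hX (hT 1 zero_le_one
    ((norm_one_sub_pow_le hq1.le D).trans_eq (mul_one _).symm)) n).trans (max_le hW (hT δ hδ hqD))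
  rw [eulerSummand_mul_add_sub (norm_ne_zero_iff.mp (by simp [hq1])) hD hξ hψ]
  simp only [norm_mul, norm_pow, norm_neg, norm_one, norm_zpow, hq1, hξ1, one_pow, one_zpow,
    mul_one, one_mul]
  exact mul_le_mul_of_nonneg_left hbracket (norm_nonneg _)

lemma norm_eulerRiemannSum_mul_sub_le {D : ℕ} (hq : ‖1 - q‖ < 1) (hD : Odd D) (hξ : ξ ^ D = 1)
    (hψ : Function.Periodic ψ D) {δ : ℝ} (hδ : 0 ≤ δ) (hqD : ‖1 - q ^ D‖ ≤ ‖1 - q‖ * δ)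
    {B : ℝ} (hB : ∀ a, ‖ψ a‖ ≤ B) {r : ℕ} (hr : Odd r) :
    ‖eulerRiemannSum ψ q ξ h n (D * r) - eulerRiemannSum ψ q ξ h n D‖ ≤ B * δ := by
  have hBδ : 0 ≤ B * δ := mul_nonneg ((norm_nonneg _).trans (hB 0)) hδ
  rw [eulerRiemannSum, eulerRiemannSum, sum_range_mul_sub_sum_range _ _ hr]
  refine norm_sum_le_of_forall_le_of_nonneg hBδ fun a _ =>
    norm_sum_le_of_forall_le_of_nonneg hBδ fun i _ => ?_
  exact (norm_eulerSummand_mul_add_sub_le hq hD hξ hψ hδ hqD i a).trans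
    (mul_le_mul_of_nonneg_right (hB a) hδ)

end RiemannSum

section Interpolation

variable {K : Type*} [NormedField K] [IsUltrametricDist K] {p : ℕ}

lemma cauchySeq_eulerRiemannSum (hp : p.Prime) (hp_odd : Odd p) (hpK : ‖(p : K)‖ ≤ (p : ℝ)⁻¹)
    {q ξ : K} (hq : ‖1 - q‖ ^ (p - 1) ≤ (p : ℝ)⁻¹) {m : ℕ} (hξ : ξ ^ p ^ m = 1) {d : ℕ}
    (hd : Odd d) {ψ : ℤ → K} (hψ : Function.Periodic ψ (d * p : ℕ)) {B : ℝ}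
    (hB : ∀ a, ‖ψ a‖ ≤ B) (h : ℤ) (n : ℕ) :
    CauchySeq fun N => eulerRiemannSum ψ q ξ h n (d * p ^ N) := by
  refine (cauchySeq_shift (m + 1)).mp (cauchySeq_of_le_geometric (p : ℝ)⁻¹
    (B * (p : ℝ)⁻¹ ^ (m + 1)) (inv_lt_one_of_one_lt₀ (by exact_mod_cast hp.one_lt)) fun N => ?_)
  set M := N + (m + 1)
  have hξD : ξ ^ (d * p ^ M) = 1 := by
    obtain ⟨t, ht⟩ : p ^ m ∣ d * p ^ M := dvd_mul_of_dvd_right (pow_dvd_pow p (by omega)) d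
    rw [ht, pow_mul, hξ, one_pow]
  have hψD : Function.Periodic ψ (d * p ^ M : ℕ) := by
    obtain ⟨t, ht⟩ : d * p ∣ d * p ^ M := mul_dvd_mul_left d (dvd_pow_self p (by omega))
    simpa [ht, mul_comm] using hψ.nat_mul t
  rw [dist_comm, dist_eq_norm, show N + 1 + (m + 1) = M + 1 by omega, pow_succ, ← mul_assoc]
  calc _ ≤ B * (p : ℝ)⁻¹ ^ M :=
        norm_eulerRiemannSum_mul_sub_le (lt_one_of_pow_pred_le_inv hp.one_lt hq)
          (hd.mul hp_odd.pow) hξD hψD (by positivity)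
          (norm_one_sub_pow_mul_prime_pow_le hp hpK hq d M) hB hp_odd
    _ = B * (p : ℝ)⁻¹ ^ (m + 1) * (p : ℝ)⁻¹ ^ N := by rw [pow_add]; ring

theorem exists_tendsto_eulerRiemannSum [CompleteSpace K] (hp : p.Prime) (hp_odd : Odd p)
    (hpK : ‖(p : K)‖ ≤ (p : ℝ)⁻¹) (h2 : ‖(2 : K)‖ = 1) {q ξ : K}
    (hq : ‖1 - q‖ ^ (p - 1) ≤ (p : ℝ)⁻¹) {m : ℕ} (hξ : ξ ^ p ^ m = 1) {d : ℕ} (hd : Odd d)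
    {ψ : ℤ → K} (hψ : Function.Periodic ψ (d * p : ℕ)) {B : ℝ} (hB : ∀ a, ‖ψ a‖ ≤ B)
    (h : ℤ) (n : ℕ) :
    ∃ E, Tendsto (fun N => (1 + q) / (1 + q ^ (d * p ^ N)) *
      eulerRiemannSum ψ q ξ h n (d * p ^ N)) atTop (nhds E) := by
  obtain ⟨S, hS⟩ :=
    cauchySeq_tendsto_of_complete (cauchySeq_eulerRiemannSum hp hp_odd hpK hq hξ hd hψ hB h n)
  have hden : Tendsto (fun N => 1 + q ^ (d * p ^ N)) atTop (nhds 2) := by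
    simpa [one_add_one_eq_two] using (tendsto_pow_mul_prime_pow_nhds_one hp hpK hq d).const_add 1
  exact ⟨_, (tendsto_const_nhds.div hden (norm_ne_zero_iff.mp (by simp [h2]))).mul hS⟩

theorem tendsto_sum_filter_not_dvd_eulerSummand (h2 : ‖(2 : K)‖ = 1) (hp : Odd p) {q ξ : K}
    (hq : ‖1 - q‖ < 1) {ψ : ℤ → K} (hψ : ∀ a b, ψ (a * b) = ψ a * ψ b) {h : ℤ} {n d : ℕ}
    {E E' : K}
    (hE : Tendsto (fun N => (1 + q) / (1 + q ^ (d * p ^ N)) *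
      eulerRiemannSum ψ q ξ h n (d * p ^ N)) atTop (nhds E))
    (hE' : Tendsto (fun N => (1 + q ^ p) / (1 + (q ^ p) ^ (d * p ^ N)) *
      eulerRiemannSum ψ (q ^ p) (ξ ^ p) h n (d * p ^ N)) atTop (nhds E')) :
    Tendsto (fun N => (1 + q) / (1 + q ^ (d * p ^ N)) *
      ∑ a ∈ (range (d * p ^ N)).filter (fun a => ¬ p ∣ a), eulerSummand ψ q ξ h n a) atTop
      (nhds (E - ψ p * ((1 - q ^ p) / (1 - q)) ^ n * ((1 + q) / (1 + q ^ p)) * E')) := by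
  have hqp : 1 + q ^ p ≠ 0 := one_add_ne_zero_of_norm_one_sub_lt_one h2
    ((norm_one_sub_pow_le (norm_eq_one_of_norm_one_sub_lt_one hq).le p).trans_lt hq)
  refine (hE.sub ((hE'.comp (tendsto_sub_atTop_nat 1)).const_mul
    (ψ p * ((1 - q ^ p) / (1 - q)) ^ n * ((1 + q) / (1 + q ^ p))))).congr' ?_
  filter_upwards [eventually_ge_atTop 1] with N hN
  obtain ⟨M, rfl⟩ := Nat.exists_eq_add_of_le' hN
  have hD : d * p ^ (M + 1) = p * (d * p ^ M) := by ring
  have hprefactor : (1 + q) / (1 + q ^ (d * p ^ (M + 1))) =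
      (1 + q) / (1 + q ^ p) * ((1 + q ^ p) / (1 + (q ^ p) ^ (d * p ^ M))) := by
    rw [← pow_mul, ← hD, div_mul_div_cancel₀ hqp]
  simp only [Function.comp_apply, Nat.add_sub_cancel]
  rw [hprefactor, hD, sum_filter_not_dvd_eulerSummand hψ hp]
  ring

end Interpolation

theorem padic_twisted_hq_euler_l_interpolation_general
    {p : ℕ} [Fact p.Prime] (hp : Odd p)
    {K : Type*} [NontriviallyNormedField K] [CompleteSpace K] [IsUltrametricDist K]
    [Algebra ℚ_[p] K] (halg : ∀ x : ℚ_[p], ‖algebraMap ℚ_[p] K x‖ = ‖x‖)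
    (q ξ : K) (hq : ‖1 - q‖ < (p : ℝ) ^ (-(1 : ℝ) / ((p : ℝ) - 1)))
    (m : ℕ) (hξ : ξ ^ p ^ m = 1) (h : ℤ) (n : ℕ)
    {d : ℕ} (hd : Odd d)
    (c : ℕ) (hcdvd : c ∣ d * p)
    (ψ : ℤ → K) (hψper : ∀ a : ℤ, ψ (a + c) = ψ a)
    (hψmul : ∀ a b : ℤ, ψ (a * b) = ψ a * ψ b) :
    ∃ E E' L : K,
      Tendsto (fun N : ℕ => ((1 + q) / (1 + q ^ (d * p ^ N))) *
          ∑ a ∈ Finset.range (d * p ^ N),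
            ψ (a : ℤ) * q ^ ((h - 1) * (a : ℤ)) * ξ ^ a *
              ((1 - q ^ a) / (1 - q)) ^ n * (-q) ^ a) atTop (nhds E) ∧
      Tendsto (fun N : ℕ => ((1 + q ^ p) / (1 + (q ^ p) ^ (d * p ^ N))) *
          ∑ a ∈ Finset.range (d * p ^ N),
            ψ (a : ℤ) * (q ^ p) ^ ((h - 1) * (a : ℤ)) * (ξ ^ p) ^ a *
              ((1 - (q ^ p) ^ a) / (1 - q ^ p)) ^ n * (-(q ^ p)) ^ a) atTop (nhds E') ∧
      Tendsto (fun N : ℕ => ((1 + q) / (1 + q ^ (d * p ^ N))) *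
          ∑ a ∈ (Finset.range (d * p ^ N)).filter (fun a => ¬ p ∣ a),
            ψ (a : ℤ) * q ^ ((h - 1) * (a : ℤ)) * ξ ^ a *
              ((1 - q ^ a) / (1 - q)) ^ n * (-q) ^ a) atTop (nhds L) ∧
      L = E - ψ (p : ℤ) * ((1 - q ^ p) / (1 - q)) ^ n * ((1 + q) / (1 + q ^ p)) * E' := by
  have hpp : p.Prime := Fact.out
  have hpK : ‖(p : K)‖ ≤ (p : ℝ)⁻¹ := by
    rw [← map_natCast (algebraMap ℚ_[p] K), halg, Padic.norm_p]
  have h2 : ‖(2 : K)‖ = 1 := by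
    rw [← Nat.cast_ofNat, ← map_natCast (algebraMap ℚ_[p] K), halg, Padic.norm_natCast_eq_one_iff,
      Nat.coprime_primes hpp Nat.prime_two]
    rintro rfl
    exact Nat.not_odd_iff_even.mpr even_two hp
  have hq' : ‖1 - q‖ ^ (p - 1) ≤ (p : ℝ)⁻¹ :=
    pow_pred_le_inv_of_lt_rpow hpp.one_lt (norm_nonneg _) hq
  have hq1 : ‖1 - q‖ < 1 := lt_one_of_pow_pred_le_inv hpp.one_lt hq'
  have hqp : ‖1 - q ^ p‖ ^ (p - 1) ≤ (p : ℝ)⁻¹ := (pow_le_pow_left₀ (norm_nonneg _)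
    (norm_one_sub_pow_le (norm_eq_one_of_norm_one_sub_lt_one hq1).le p) _).trans hq'
  have hξp : (ξ ^ p) ^ p ^ m = 1 := by rw [← pow_mul, mul_comm, pow_mul, hξ, one_pow]
  have hψ : Function.Periodic ψ (d * p : ℕ) := by
    obtain ⟨t, ht⟩ := hcdvd
    simpa [ht, mul_comm] using (show Function.Periodic ψ c from hψper).nat_mul t
  obtain ⟨B, hB⟩ := hψ.exists_norm_le (Nat.mul_pos hd.pos hpp.pos)
  obtain ⟨E, hE⟩ := exists_tendsto_eulerRiemannSum hpp hp hpK h2 hq' hξ hd hψ hB h n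
  obtain ⟨E', hE'⟩ := exists_tendsto_eulerRiemannSum hpp hp hpK h2 hqp hξp hd hψ hB h n
  exact ⟨E, E', _, hE, hE', tendsto_sum_filter_not_dvd_eulerSummand h2 hp hq1 hψmul hE hE', rfl⟩

/-- Theorem 2: the fermionic `p`-adic `q`-integrals defining
`E^{(h)}_{n,q,ξ,ψ}`, `E^{(h)}_{n,q^p,ξ^p,ψ}` and `l^{(h)}_{p,q,ξ}(−n, ψ)` (the latter
taken over `X* = X ∖ pX`) all exist, and
`l^{(h)}_{p,q,ξ}(−n, ψ) = E^{(h)}_{n,q,ξ,ψ} − ψ(p) [p]_q^n ([2]_q/[2]_{q^p})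
  E^{(h)}_{n,q^p,ξ^p,ψ}`. -/
theorem padic_twisted_hq_euler_l_interpolation
    {p : ℕ} [Fact p.Prime] (hp : Odd p)
    {K : Type*} [NontriviallyNormedField K] [CompleteSpace K] [IsUltrametricDist K]
    [Algebra ℚ_[p] K] (halg : ∀ x : ℚ_[p], ‖algebraMap ℚ_[p] K x‖ = ‖x‖)
    (q ξ : K) (hq : ‖1 - q‖ < (p : ℝ) ^ (-(1 : ℝ) / ((p : ℝ) - 1)))
    (m : ℕ) (hξ : ξ ^ p ^ m = 1) (h : ℤ) (n : ℕ)
    {d : ℕ} (hd : Odd d) (hdpos : 0 < d) (hpd : ¬ p ∣ d)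
    (c : ℕ) (hcpos : 0 < c) (hcdvd : c ∣ d * p)
    (ψ : ℤ → K) (hψper : ∀ a : ℤ, ψ (a + c) = ψ a)
    (hψmul : ∀ a b : ℤ, ψ (a * b) = ψ a * ψ b) (hψone : ψ 1 = 1)
    (hψzero : ∀ a : ℤ, 1 < Int.gcd a c → ψ a = 0) :
    ∃ E E' L : K,
      Tendsto (fun N : ℕ => ((1 + q) / (1 + q ^ (d * p ^ N))) *
          ∑ a ∈ Finset.range (d * p ^ N),
            ψ (a : ℤ) * q ^ ((h - 1) * (a : ℤ)) * ξ ^ a *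
              ((1 - q ^ a) / (1 - q)) ^ n * (-q) ^ a) atTop (nhds E) ∧
      Tendsto (fun N : ℕ => ((1 + q ^ p) / (1 + (q ^ p) ^ (d * p ^ N))) *
          ∑ a ∈ Finset.range (d * p ^ N),
            ψ (a : ℤ) * (q ^ p) ^ ((h - 1) * (a : ℤ)) * (ξ ^ p) ^ a *
              ((1 - (q ^ p) ^ a) / (1 - q ^ p)) ^ n * (-(q ^ p)) ^ a) atTop (nhds E') ∧
      Tendsto (fun N : ℕ => ((1 + q) / (1 + q ^ (d * p ^ N))) *
          ∑ a ∈ (Finset.range (d * p ^ N)).filter (fun a => ¬ p ∣ a),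
            ψ (a : ℤ) * q ^ ((h - 1) * (a : ℤ)) * ξ ^ a *
              ((1 - q ^ a) / (1 - q)) ^ n * (-q) ^ a) atTop (nhds L) ∧
      L = E - ψ (p : ℤ) * ((1 - q ^ p) / (1 - q)) ^ n * ((1 + q) / (1 + q ^ p)) * E' :=
  padic_twisted_hq_euler_l_interpolation_general hp halg q ξ hq m hξ h n hd c hcdvd ψ hψper hψmul
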